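/- For every λ > 0 and every real ν, the absolutely convergent integral (3/(4π)) · ∫₀^∞ [sin⁴(λt/4) / (λ³ (t/4)⁴)] · cos(νt) dt equals E(ν/λ); that is, it equals 1 − 6(ν/λ)² + 6(|ν|/λ)³ for |ν| ≤ λ/2, equals 2(1 − |ν|/λ)³ for λ/2 ≤ |ν| ≤ λ, and equals 0 for |ν| ≥ λ. -/

import Mathlib

open MeasureTheory

/-- The sieving kernel `E`: `E(ν) = 1 - 6ν² + 6|ν|³` for `|ν| ≤ 1/2`,
`E(ν) = 2(1-|ν|)³` for `1/2 ≤ |ν| ≤ 1`, and `E(ν) = 0` for `|ν| ≥ 1`. -/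
noncomputable def Ekernel (ν : ℝ) : ℝ :=
  if |ν| ≤ 1 / 2 then 1 - 6 * ν ^ 2 + 6 * |ν| ^ 3
  else if |ν| ≤ 1 then 2 * (1 - |ν|) ^ 3
  else 0

/-!
Writing `E(x) = 2 (1 - |x|)₊³ - 8 (1/2 - |x|)₊³` (a multiple of the four-fold convolution of the
indicator of `[-1/4, 1/4]`), an explicit antiderivative of `(b - x)³ cos (c x)` gives the Fourier
transform `𝓕 E (ξ) = (3/4) sinc (πξ/2)⁴`. It is integrable, so Fourier inversion expresses `E` as a
cosine integral of `sinc⁴`; the substitution `u = 2πξ`, evenness, and the rescaling `t ↦ λ t`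
turn this into the stated formula.
-/

open Real Set FourierTransform

lemma Function.Odd.integral_eq_zero {G E : Type*} [AddGroup G] [MeasurableSpace G]
    [MeasurableNeg G] [NormedAddCommGroup E] [NormedSpace ℝ E] {μ : Measure G}
    [μ.IsNegInvariant] {f : G → E} (hf : f.Odd) : ∫ x, f x ∂μ = 0 := by
  have h := integral_neg_eq_self f μ
  simp_rw [hf.eq, integral_neg] at h
  have h₂ : (2 : ℝ) • ∫ x, f x ∂μ = 0 := by
    rw [two_smul]; nth_rw 1 [← h]; exact neg_add_cancel _
  simpa using h₂

lemma MeasureTheory.Integrable.mul_cos {f : ℝ → ℝ} (hf : Integrable f) (c : ℝ) :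
    Integrable fun x => f x * cos (c * x) :=
  hf.mul_bdd (by fun_prop) (ae_of_all _ fun x => by simpa using abs_cos_le_one (c * x))

lemma Real.fourier_ofReal_of_even {f : ℝ → ℝ} (hf : Integrable f) (heven : f.Even)
    (ξ : ℝ) :
    𝓕 (fun x => (f x : ℂ)) ξ = ↑(∫ x, f x * cos (2 * π * ξ * x)) := by
  rw [fourier_real_eq_integral_exp_smul]
  have hint :
      Integrable fun x : ℝ => Complex.exp (↑(-2 * π * x * ξ) * Complex.I) • (f x : ℂ) :=
    hf.ofReal.bdd_mul (by fun_prop) (ae_of_all _ fun x => (Complex.norm_exp_ofReal_mul_I _).le)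
  apply Complex.ext
  · rw [← Complex.reCLM_apply, ← ContinuousLinearMap.integral_comp_comm _ hint]
    simp only [Complex.reCLM_apply, smul_eq_mul, Complex.re_mul_ofReal,
      Complex.exp_ofReal_mul_I_re, Complex.ofReal_re]
    congr with x
    rw [mul_comm, ← cos_neg]; ring_nf
  · rw [← Complex.imCLM_apply, ← ContinuousLinearMap.integral_comp_comm _ hint]
    simp only [Complex.imCLM_apply, smul_eq_mul, Complex.im_mul_ofReal,
      Complex.exp_ofReal_mul_I_im, Complex.ofReal_im]
    refine Function.Odd.integral_eq_zero fun x => ?_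
    rw [heven.eq, ← neg_mul, ← sin_neg]; ring_nf

lemma Real.mul_sinc (x : ℝ) : x * sinc x = sin x := by
  rcases eq_or_ne x 0 with rfl | hx
  · simp
  · rw [sinc_of_ne_zero hx, mul_div_cancel₀ _ hx]

lemma Real.sinc_sq_le_two_mul_inv_one_add_sq (x : ℝ) : sinc x ^ 2 ≤ 2 * (1 + x ^ 2)⁻¹ := by
  rw [← div_eq_mul_inv, le_div_iff₀ (by positivity)]
  have h₁ : sinc x ^ 2 ≤ 1 := (sq_le_one_iff_abs_le_one _).mpr (abs_sinc_le_one x)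
  have h₂ : (x * sinc x) ^ 2 ≤ 1 := by rw [mul_sinc]; exact sin_sq_le_one x
  nlinarith

lemma Real.integrable_sinc_pow {n : ℕ} (hn : 2 ≤ n) : Integrable fun x => sinc x ^ n := by
  refine (integrable_inv_one_add_sq.const_mul 2).mono' (by fun_prop) (ae_of_all _ fun x => ?_)
  rw [norm_pow, norm_eq_abs]
  calc |sinc x| ^ n ≤ |sinc x| ^ 2 := pow_le_pow_of_le_one (abs_nonneg _) (abs_sinc_le_one x) hn
    _ = sinc x ^ 2 := sq_abs _
    _ ≤ 2 * (1 + x ^ 2)⁻¹ := sinc_sq_le_two_mul_inv_one_add_sq x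

lemma Real.cos_sub_four_mul_cos_half_add_three (c : ℝ) :
    cos c - 4 * cos (c / 2) + 3 = 8 * sin (c / 4) ^ 4 := by
  have h₁ : cos (c / 2) = 1 - 2 * sin (c / 4) ^ 2 := by
    rw [show c / 2 = 2 * (c / 4) by ring, cos_two_mul, cos_sq']; ring
  have h₂ : cos c = 2 * cos (c / 2) ^ 2 - 1 := by
    rw [← cos_two_mul]; ring_nf
  rw [h₂, h₁]; ring

-- Three integrations by parts: `(p/c - p''/c³) sin (c x) + (p'/c² - p'''/c⁴) cos (c x)`
-- with `p = (b - x)³`.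
lemma hasDerivAt_sub_pow_three_mul_cos_antideriv {c : ℝ} (hc : c ≠ 0) (b x : ℝ) :
    HasDerivAt (fun x => ((b - x) ^ 3 / c - 6 * (b - x) / c ^ 3) * sin (c * x)
      + (6 / c ^ 4 - 3 * (b - x) ^ 2 / c ^ 2) * cos (c * x)) ((b - x) ^ 3 * cos (c * x)) x := by
  have hu : HasDerivAt (fun x => b - x) (-1) x := by simpa using (hasDerivAt_id x).const_sub b
  have hsin : HasDerivAt (fun x => sin (c * x)) (cos (c * x) * c) x := by
    simpa using ((hasDerivAt_id x).const_mul c).sin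
  have hcos : HasDerivAt (fun x => cos (c * x)) (-sin (c * x) * c) x := by
    simpa using ((hasDerivAt_id x).const_mul c).cos
  exact ((((hu.pow 3).div_const c).sub ((hu.const_mul 6).div_const (c ^ 3))).mul hsin).add
    (((hasDerivAt_const x (6 / c ^ 4)).sub ((hu.pow 2).const_mul 3 |>.div_const (c ^ 2))).mul hcos)
    |>.congr_deriv (by simp only [Pi.sub_apply, Pi.pow_apply]; field_simp; ring)

lemma integral_sub_pow_three_mul_cos {c : ℝ} (hc : c ≠ 0) (b : ℝ) :
    ∫ x in 0..b, (b - x) ^ 3 * cos (c * x) =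
      (6 * cos (c * b) + 3 * b ^ 2 * c ^ 2 - 6) / c ^ 4 := by
  rw [intervalIntegral.integral_eq_sub_of_hasDerivAt
    (fun x _ => hasDerivAt_sub_pow_three_mul_cos_antideriv hc b x)
    (by apply Continuous.intervalIntegrable; fun_prop)]
  simp only [sub_self, sub_zero, mul_zero, sin_zero, cos_zero]
  field_simp
  ring

noncomputable def truncCube (b x : ℝ) : ℝ := max (b - |x|) 0 ^ 3

lemma continuous_truncCube (b : ℝ) : Continuous (truncCube b) := by
  unfold truncCube; fun_prop

lemma truncCube_neg (b x : ℝ) : truncCube b (-x) = truncCube b x := by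
  rw [truncCube, abs_neg, truncCube]

lemma truncCube_of_le {b x : ℝ} (h : b ≤ |x|) : truncCube b x = 0 := by
  simp [truncCube, h]

lemma integrable_truncCube (b : ℝ) : Integrable (truncCube b) :=
  (continuous_truncCube b).integrable_of_hasCompactSupport <|
    HasCompactSupport.intro (isCompact_closedBall 0 b) fun x hx =>
      truncCube_of_le (by simp at hx; exact hx.le)

lemma integral_truncCube_mul_cos {b c : ℝ} (hb : 0 ≤ b) (hc : c ≠ 0) :
    ∫ x, truncCube b x * cos (c * x) =
      2 * ((6 * cos (c * b) + 3 * b ^ 2 * c ^ 2 - 6) / c ^ 4) := by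
  have heven : (fun x => truncCube b x * cos (c * x)) =
      fun x => truncCube b |x| * cos (c * |x|) := by
    ext x
    rcases abs_choice x with h | h <;> simp [h, truncCube_neg]
  rw [heven, integral_comp_abs (f := fun x => truncCube b x * cos (c * x)),
    ← integral_sub_pow_three_mul_cos hc b, intervalIntegral.integral_of_le hb,
    setIntegral_eq_of_subset_of_forall_sdiff_eq_zero measurableSet_Ioi Ioc_subset_Ioi_self]
  · refine congrArg _ (setIntegral_congr_fun measurableSet_Ioc fun x hx => ?_)
    rw [truncCube, abs_of_pos hx.1, max_eq_left (by linarith [hx.2])]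
  · intro x hx
    obtain ⟨hx₀ : 0 < x, hxb⟩ := hx
    have hbx : b < x := by simpa [hx₀] using hxb
    rw [truncCube_of_le (by rw [abs_of_pos hx₀]; exact hbx.le), zero_mul]

lemma Ekernel_eq_truncCube (x : ℝ) :
    Ekernel x = 2 * truncCube 1 x - 8 * truncCube (1 / 2) x := by
  unfold Ekernel truncCube
  split_ifs with h₁ h₂
  · rw [max_eq_left (by linarith), max_eq_left (by linarith), ← sq_abs x]; ring
  · rw [max_eq_left (by linarith), max_eq_right (by linarith)]; ring
  · rw [max_eq_right (by linarith), max_eq_right (by linarith)]; ring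

lemma continuous_Ekernel : Continuous Ekernel := by
  simp_rw [funext Ekernel_eq_truncCube]
  exact ((continuous_truncCube 1).const_mul 2).sub ((continuous_truncCube _).const_mul 8)

lemma integrable_Ekernel : Integrable Ekernel := by
  simp_rw [funext Ekernel_eq_truncCube]
  exact ((integrable_truncCube 1).const_mul 2).sub ((integrable_truncCube _).const_mul 8)

lemma even_Ekernel : Ekernel.Even := fun x => by
  simp_rw [Ekernel_eq_truncCube, truncCube_neg]

lemma integral_Ekernel_mul_cos {c : ℝ} (hc : c ≠ 0) :
    ∫ x, Ekernel x * cos (c * x) = 3 / 4 * sinc (c / 4) ^ 4 := by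
  have hint : ∀ b, Integrable fun x => truncCube b x * cos (c * x) := fun b =>
    (integrable_truncCube b).mul_cos c
  simp_rw [Ekernel_eq_truncCube, sub_mul, mul_assoc]
  rw [integral_sub ((hint 1).const_mul 2) ((hint _).const_mul 8), integral_const_mul,
    integral_const_mul, integral_truncCube_mul_cos zero_le_one hc,
    integral_truncCube_mul_cos (by norm_num) hc, sinc_of_ne_zero (by positivity), mul_one,
    show c * (1 / 2) = c / 2 by ring,
    eq_sub_of_add_eq (eq_sub_of_add_eq (cos_sub_four_mul_cos_half_add_three c))]
  field_simp
  ring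

lemma fourier_Ekernel_ae_eq :
    𝓕 (fun x => (Ekernel x : ℂ)) =ᵐ[volume]
      fun ξ => ((3 / 4 * sinc (2 * π * ξ / 4) ^ 4 : ℝ) : ℂ) :=
  (Measure.ae_ne volume 0).mono fun ξ hξ => by
    rw [fourier_ofReal_of_even integrable_Ekernel even_Ekernel,
      integral_Ekernel_mul_cos (by positivity)]

lemma Ekernel_eq_integral_sinc_pow_four_mul_cos (x : ℝ) :
    Ekernel x = ∫ ξ, 3 / 4 * sinc (2 * π * ξ / 4) ^ 4 * cos (x * (2 * π * ξ)) := by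
  set h : ℝ → ℝ := fun ξ => 3 / 4 * sinc (2 * π * ξ / 4) ^ 4
  have hh : Integrable h :=
    (((integrable_sinc_pow (n := 4) (by norm_num)).comp_div (by norm_num)).comp_mul_left'
      (by positivity)).const_mul _
  have heven : h.Even := fun ξ => by simp [h, mul_neg, neg_div, sinc_neg]
  have inversion := integrable_Ekernel.ofReal.fourierInv_fourier_eq
    (hh.ofReal.congr fourier_Ekernel_ae_eq.symm)
    (Complex.continuous_ofReal.comp continuous_Ekernel).continuousAt (v := x)
  rw [fourierInv_eq_fourier_neg, fourier_real_eq,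
    integral_congr_ae (fourier_Ekernel_ae_eq.mono fun ξ hξ => by rw [hξ]),
    ← fourier_real_eq, fourier_ofReal_of_even hh heven] at inversion
  rw [← Complex.ofReal_inj.mp inversion]
  congr with ξ
  simp only [h]
  rw [← cos_neg]; ring_nf

lemma Ekernel_eq_integral_Ioi_sinc_pow_four_mul_cos (x : ℝ) :
    Ekernel x = 3 / (4 * π) * ∫ u in Ioi 0, sinc (u / 4) ^ 4 * cos (x * u) := by
  set k : ℝ → ℝ := fun u => sinc (u / 4) ^ 4 * cos (x * u)
  have hk : ∀ u, k |u| = k u := fun u => by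
    rcases abs_choice u with h | h <;> simp [k, h, neg_div, sinc_neg]
  calc Ekernel x = ∫ ξ, 3 / 4 * k (2 * π * ξ) := by
        simp_rw [Ekernel_eq_integral_sinc_pow_four_mul_cos, k, mul_assoc]
    _ = 3 / 4 * ((2 * π)⁻¹ * ∫ u, k |u|) := by
        rw [integral_const_mul, Measure.integral_comp_mul_left, abs_of_pos (by positivity),
          smul_eq_mul]
        simp_rw [hk]
    _ = 3 / (4 * π) * ∫ u in Ioi 0, k u := by
        rw [integral_comp_abs]
        field_simp

/-- For every `λ > 0` and real `ν`, the absolutely convergent integral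
`(3/(4π)) ∫₀^∞ sin⁴(λt/4)/(λ³(t/4)⁴) · cos(νt) dt` equals `E(ν/λ)`. -/
theorem integral_sin_pow_four_kernel (lam : ℝ) (hlam : 0 < lam) (ν : ℝ) :
    IntegrableOn
        (fun t : ℝ => Real.sin (lam * t / 4) ^ 4 / (lam ^ 3 * (t / 4) ^ 4) * Real.cos (ν * t))
        (Set.Ioi 0) ∧
      3 / (4 * Real.pi) *
          ∫ t in Set.Ioi (0 : ℝ),
            Real.sin (lam * t / 4) ^ 4 / (lam ^ 3 * (t / 4) ^ 4) * Real.cos (ν * t) =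
        Ekernel (ν / lam) := by
  set k : ℝ → ℝ := fun u => sinc (u / 4) ^ 4 * cos (ν / lam * u)
  have hk : EqOn (fun t => sin (lam * t / 4) ^ 4 / (lam ^ 3 * (t / 4) ^ 4) * cos (ν * t))
      (fun t => lam * k (lam * t)) (Ioi 0) := fun t (ht : 0 < t) => by
    simp only [k, sinc_of_ne_zero (by positivity : lam * t / 4 ≠ 0)]
    field_simp
  have hk_int : IntegrableOn k (Ioi (lam * 0)) :=
    ((integrable_sinc_pow (n := 4) (by norm_num)).comp_div (by norm_num)).mul_cos _ |>.integrableOn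
  constructor
  · rw [integrableOn_congr_fun hk measurableSet_Ioi]
    exact ((integrableOn_Ioi_comp_mul_left_iff k 0 hlam).2 hk_int).const_mul lam
  · rw [setIntegral_congr_fun measurableSet_Ioi hk, integral_const_mul,
      integral_comp_mul_left_Ioi k 0 hlam, mul_zero, smul_eq_mul, mul_inv_cancel_left₀ hlam.ne',
      Ekernel_eq_integral_Ioi_sinc_pow_four_mul_cos]
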